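/- arXiv:1807.04261 — 2 statements merged into one kernel-verified Lean document; each statement's English description precedes it below -/
import Mathlib

section
/- Fix 0 < ε < d⁻⁴·(1/(16π))² and let d ≥ 2. Suppose W_i ∈ ℝ^{n_i×n_{i−1}} satisfies the Weight Distribution Condition with constant ε for i = 1,…,d. Then for all nonzero x, y ∈ ℝ^k: ⟨(Π_{i=d}^1 W_{i,+,x})·x, (Π_{i=d}^1 W_{i,+,y})·y⟩ ≥ (1/(4π))·(1/2^d)·‖x‖·‖y‖. -/
open Real Filter Set MeasureTheory ProbabilityTheory Matrix
open scoped Classical BigOperators NNReal ENNReal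

noncomputable section

namespace DPR

/-- Euclidean dot product on `Fin n → ℝ`. -/
def dotp {n : ℕ} (u v : Fin n → ℝ) : ℝ := ∑ i, u i * v i

/-- Euclidean norm on `Fin n → ℝ`. -/
def nrm {n : ℕ} (v : Fin n → ℝ) : ℝ := Real.sqrt (dotp v v)

/-- Angle between two vectors. -/
def angl {n : ℕ} (u v : Fin n → ℝ) : ℝ := Real.arccos (dotp u v / (nrm u * nrm v))

/-- Spectral norm of a matrix: the operator norm of the induced map between
Euclidean spaces. -/
def specNorm {a b : ℕ} (M : Matrix (Fin a) (Fin b) ℝ) : ℝ :=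
  ‖LinearMap.toContinuousLinearMap (Matrix.toEuclideanLin M)‖

/-- The symmetric matrix `M_{x̂↔ŷ}` sending `x̂ ↦ ŷ`, `ŷ ↦ x̂` and vanishing on
`span{x,y}ᗮ`. -/
def swapMat {n : ℕ} (x y : Fin n → ℝ) : Matrix (Fin n) (Fin n) ℝ :=
  let u := (nrm x)⁻¹ • x
  let v := (nrm y)⁻¹ • y
  let c := dotp u v
  let w := v - c • u
  if dotp w w = 0 then c • Matrix.vecMulVec u u
  else
    c • Matrix.vecMulVec u u + Matrix.vecMulVec u w + Matrix.vecMulVec w u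
      - (c / dotp w w) • Matrix.vecMulVec w w

/-- `Q_{x,y} = ((π − θ)/(2π))·I + (sin θ/(2π))·M_{x̂↔ŷ}`. -/
def Qmat {k : ℕ} (x y : Fin k → ℝ) : Matrix (Fin k) (Fin k) ℝ :=
  ((π - angl x y) / (2 * π)) • (1 : Matrix (Fin k) (Fin k) ℝ)
    + (Real.sin (angl x y) / (2 * π)) • swapMat x y

/-- `Φ_{z,w} = ((π − 2θ)/π)·I + (2 sin θ/π)·M_{ẑ↔ŵ}`. -/
def Phi {n : ℕ} (z w : Fin n → ℝ) : Matrix (Fin n) (Fin n) ℝ :=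
  ((π - 2 * angl z w) / π) • (1 : Matrix (Fin n) (Fin n) ℝ)
    + (2 * Real.sin (angl z w) / π) • swapMat z w

/-- `W_{+,v} = diag(1_{Wv>0})·W`. -/
def posPart {a b : ℕ} (W : Matrix (Fin a) (Fin b) ℝ) (v : Fin b → ℝ) :
    Matrix (Fin a) (Fin b) ℝ :=
  Matrix.of fun i j => if 0 < W.mulVec v i then W i j else 0

/-- Weight Distribution Condition with constant `ε`. -/
def WDC {a k : ℕ} (W : Matrix (Fin a) (Fin k) ℝ) (ε : ℝ) : Prop :=
  ∀ x y : Fin k → ℝ, x ≠ 0 → y ≠ 0 →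
    specNorm ((posPart W x)ᵀ * posPart W y - Qmat x y) ≤ ε

/-- `A_z = diag(sgn(Az))·A`. -/
def signedMat {a b : ℕ} (A : Matrix (Fin a) (Fin b) ℝ) (z : Fin b → ℝ) :
    Matrix (Fin a) (Fin b) ℝ :=
  Matrix.of fun i j => Real.sign (A.mulVec z i) * A i j

/-- Entrywise ReLU. -/
def reluV {a : ℕ} (v : Fin a → ℝ) : Fin a → ℝ := fun i => max (v i) 0

/-- Entrywise absolute value. -/
def absV {a : ℕ} (v : Fin a → ℝ) : Fin a → ℝ := fun i => |v i|

/-- The `d`-layer ReLU network `G(x) = relu(W_d ⋯ relu(W_1 x) ⋯)`. -/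
def net (n : ℕ → ℕ) (W : ∀ i : ℕ, Matrix (Fin (n (i + 1))) (Fin (n i)) ℝ) :
    (d : ℕ) → (Fin (n 0) → ℝ) → Fin (n d) → ℝ
  | 0, x => x
  | d + 1, x => reluV ((W d).mulVec (net n W d x))

/-- The product `Π_{i=d}^1 W_{i,+,x}`. -/
def layerProd (n : ℕ → ℕ) (W : ∀ i : ℕ, Matrix (Fin (n (i + 1))) (Fin (n i)) ℝ) :
    (d : ℕ) → (Fin (n 0) → ℝ) → Matrix (Fin (n d)) (Fin (n 0)) ℝ
  | 0, _ => 1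
  | d + 1, x => posPart (W d) ((layerProd n W d x).mulVec x) * layerProd n W d x

/-- The matrix `W_{i+1,+,x}` (the `(i+1)`-st layer, zero-indexed as `i`). -/
def layerPos (n : ℕ → ℕ) (W : ∀ i : ℕ, Matrix (Fin (n (i + 1))) (Fin (n i)) ℝ)
    (i : ℕ) (x : Fin (n 0) → ℝ) : Matrix (Fin (n (i + 1))) (Fin (n i)) ℝ :=
  posPart (W i) ((layerProd n W i x).mulVec x)

/-- `g(θ) = arccos((cos θ·(π − θ) + sin θ)/π)`. -/
def gfun (θ : ℝ) : ℝ := Real.arccos ((Real.cos θ * (π - θ) + Real.sin θ) / π)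

/-- The sequence `θ_0 = θ₀`, `θ_{i+1} = g(θ_i)`. -/
def thetaSeq (θ₀ : ℝ) : ℕ → ℝ
  | 0 => θ₀
  | i + 1 => gfun (thetaSeq θ₀ i)

/-- `ρ_d`. -/
def rho (d : ℕ) : ℝ :=
  -(2 * Real.sin (thetaSeq π d)) / π +
    ((π - 2 * thetaSeq π d) / π) *
      ∑ i ∈ Finset.range d,
        (Real.sin (thetaSeq π i) / π) * ∏ j ∈ Finset.Ico (i + 1) d, (π - thetaSeq π j) / π

/-- The vector `h_{x,y}`. -/
def hvec (d : ℕ) {k : ℕ} (x y : Fin k → ℝ) : Fin k → ℝ :=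
  (-(nrm y / 2 ^ d) * ((π - 2 * thetaSeq (angl x y) d) / π) *
      ∏ i ∈ Finset.range d, (π - thetaSeq (angl x y) i) / π) • ((nrm y)⁻¹ • y) +
    ((1 / 2 ^ d) *
        (nrm x -
          nrm y *
            (2 * Real.sin (thetaSeq (angl x y) d) / π -
              ((π - 2 * thetaSeq (angl x y) d) / π) *
                ∑ i ∈ Finset.range d,
                  (Real.sin (thetaSeq (angl x y) i) / π) *
                    ∏ j ∈ Finset.Ico (i + 1) d, (π - thetaSeq (angl x y) j) / π))) •
      ((nrm x)⁻¹ • x)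

/-- The vector `h̃_{x,y}`. -/
def htil (d : ℕ) {k : ℕ} (x y : Fin k → ℝ) : Fin k → ℝ :=
  (1 / 2 ^ d) •
    ((∏ i ∈ Finset.range d, (π - thetaSeq (angl x y) i) / π) • y +
      (∑ i ∈ Finset.range d,
          (Real.sin (thetaSeq (angl x y) i) / π) *
            ∏ j ∈ Finset.Ico (i + 1) d, (π - thetaSeq (angl x y) j) / π) •
        ((nrm y / nrm x) • x))

/-- The set `S_{ε,x₀}`. -/
def Sset (d : ℕ) {k : ℕ} (ε : ℝ) (x₀ : Fin k → ℝ) : Set (Fin k → ℝ) :=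
  {x | x ≠ 0 ∧ nrm (hvec d x x₀) ≤ ε / 2 ^ d * max (nrm x) (nrm x₀)}

/-- The vector `v̄_{x,y}`. -/
def vbar (n : ℕ → ℕ) (W : ∀ i : ℕ, Matrix (Fin (n (i + 1))) (Fin (n i)) ℝ) (d : ℕ)
    (x y : Fin (n 0) → ℝ) : Fin (n 0) → ℝ :=
  (layerProd n W d x)ᵀ.mulVec ((layerProd n W d x).mulVec x) -
    (layerProd n W d x)ᵀ.mulVec
      ((Phi ((layerProd n W d x).mulVec x) ((layerProd n W d y).mulVec y)).mulVec
        ((layerProd n W d y).mulVec y))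

/-- The objective `f(x) = (1/2)·‖ |A G(x)| − |A G(x₀)| ‖²`. -/
def objf (n : ℕ → ℕ) (W : ∀ i : ℕ, Matrix (Fin (n (i + 1))) (Fin (n i)) ℝ) (d m : ℕ)
    (A : Matrix (Fin m) (Fin (n d)) ℝ) (x₀ x : Fin (n 0) → ℝ) : ℝ :=
  (1 / 2) * nrm (absV (A.mulVec (net n W d x)) - absV (A.mulVec (net n W d x₀))) ^ 2

/-- One-sided directional derivative `D_v f(x) = L`. -/
def HasDirDeriv {k : ℕ} (f : (Fin k → ℝ) → ℝ) (x v : Fin k → ℝ) (L : ℝ) : Prop :=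
  Filter.Tendsto (fun t : ℝ => (f (x + t • v) - f x) / t) (nhdsWithin 0 (Set.Ioi 0)) (nhds L)

/-- Range Restricted Concentration Property with constant `ε`. -/
def RRCP (n : ℕ → ℕ) (W : ∀ i : ℕ, Matrix (Fin (n (i + 1))) (Fin (n i)) ℝ) (d m : ℕ)
    (A : Matrix (Fin m) (Fin (n d)) ℝ) (ε : ℝ) : Prop :=
  ∀ x y x₁ x₂ x₃ x₄ : Fin (n 0) → ℝ, x ≠ 0 → y ≠ 0 →
    |dotp
        ((((signedMat A (net n W d x))ᵀ * signedMat A (net n W d y)) -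
              Phi (net n W d x) (net n W d y)).mulVec
          (net n W d x₁ - net n W d x₂))
        (net n W d x₃ - net n W d x₄)| ≤
      7 * ε * nrm (net n W d x₁ - net n W d x₂) * nrm (net n W d x₃ - net n W d x₄)

/-- Law of an `a × b` matrix with i.i.d. `N(0, v)` entries. -/
def gaussMatrix (a b : ℕ) (v : ℝ≥0) : Measure (Fin a → Fin b → ℝ) :=
  Measure.pi fun _ : Fin a => Measure.pi fun _ : Fin b => gaussianReal 0 v

instance (a b : ℕ) (v : ℝ≥0) : IsProbabilityMeasure (gaussMatrix a b v) := by
  unfold gaussMatrix; infer_instance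

/-- Extend a `Fin d`-indexed family of weight matrices to an `ℕ`-indexed one. -/
def extW (d : ℕ) (n : ℕ → ℕ)
    (ω : ∀ i : Fin d, Fin (n (i.1 + 1)) → Fin (n i.1) → ℝ) (i : ℕ) :
    Matrix (Fin (n (i + 1))) (Fin (n i)) ℝ :=
  if h : i < d then Matrix.of (ω ⟨i, h⟩) else 0

/-- Joint law of the `d` Gaussian weight matrices (variances `1/n_i`) and the
Gaussian measurement matrix (variance `1/m`). -/
def netMeasure (d m : ℕ) (n : ℕ → ℕ) :
    Measure ((∀ i : Fin d, Fin (n (i.1 + 1)) → Fin (n i.1) → ℝ) × (Fin m → Fin (n d) → ℝ)) :=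
  (Measure.pi fun i : Fin d => gaussMatrix (n (i.1 + 1)) (n i.1) ((n (i.1 + 1) : ℝ≥0))⁻¹).prod
    (gaussMatrix m (n d) ((m : ℝ≥0))⁻¹)

/-- The geometric conclusion: outside two small balls around `x₀` and `−ρ_d·x₀`
there is a descent direction, and the origin is a local maximum direction-wise. -/
def DescentConcl (n : ℕ → ℕ) (W : ∀ i : ℕ, Matrix (Fin (n (i + 1))) (Fin (n i)) ℝ)
    (d m : ℕ) (A : Matrix (Fin m) (Fin (n d)) ℝ) (ε K₂ : ℝ) : Prop :=
  ∀ x₀ : Fin (n 0) → ℝ, x₀ ≠ 0 →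
    (∀ x : Fin (n 0) → ℝ, x ≠ 0 →
        ¬nrm (x - x₀) < K₂ * (d : ℝ) ^ 3 * ε ^ ((1 : ℝ) / 4) * nrm x₀ →
        ¬nrm (x + rho d • x₀) < K₂ * (d : ℝ) ^ 14 * ε ^ ((1 : ℝ) / 4) * nrm x₀ →
        ∃ v : Fin (n 0) → ℝ, ∃ L : ℝ,
          L < 0 ∧ HasDirDeriv (objf n W d m A x₀) x (-v) L) ∧
    ∀ x : Fin (n 0) → ℝ, x ≠ 0 →
      ∃ L : ℝ, L < 0 ∧ HasDirDeriv (objf n W d m A x₀) 0 x L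

/-!
Each WDC layer acts on inner products like the degree-one arc-cosine kernel `k`, up to `ε`:
`⟨W₊ₓ x, W₊ᵧ y⟩ = k(θ)/2 · ‖x‖‖y‖ ± ε‖x‖‖y‖` with `θ = ∠(x, y)`, where `k ≥ 0` on `[0, π]`
and `k(0) = 1`. Taking `y = x`, every layer shrinks squared norms by at most the factor
`1/2 - ε`. Because `k ≥ 0`, after any layer the two signals have cosine at least `-4ε`, and for
such angles `k(θ) ≥ (1 - 16ε² - 4πε)/π`; so the last two layers alone already give
`⟨x_d, y_d⟩ ≳ ‖x_{d-1}‖‖y_{d-1}‖/(2π) ≥ (1/2 - ε)^{d-1}‖x‖‖y‖/(2π)`, and the smallness of `dε`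
keeps `(1 - 2ε)^{d-1}` close to `1` (Bernoulli).
-/

open InnerProductGeometry

section Euclidean

variable {n : ℕ}

lemma dotp_eq_dotProduct (u v : Fin n → ℝ) : dotp u v = u ⬝ᵥ v := rfl

lemma dotp_eq_inner (u v : Fin n → ℝ) :
    dotp u v = inner ℝ (WithLp.toLp 2 u) (WithLp.toLp 2 v) := by
  simp [dotp, PiLp.inner_apply, mul_comm]

lemma nrm_eq_norm (v : Fin n → ℝ) : nrm v = ‖WithLp.toLp 2 v‖ := by
  rw [nrm, dotp_eq_inner, real_inner_self_eq_norm_sq, Real.sqrt_sq (norm_nonneg _)]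

lemma angl_eq_angle (u v : Fin n → ℝ) :
    angl u v = angle (WithLp.toLp 2 u) (WithLp.toLp 2 v) := by
  rw [angl, angle, dotp_eq_inner, nrm_eq_norm, nrm_eq_norm]

lemma nrm_nonneg (v : Fin n → ℝ) : 0 ≤ nrm v := Real.sqrt_nonneg _

lemma nrm_pos {v : Fin n → ℝ} (hv : v ≠ 0) : 0 < nrm v := by
  rw [nrm_eq_norm, norm_pos_iff]
  simpa using hv

lemma ne_zero_of_pos_le_sq_nrm {v : Fin n → ℝ} {c : ℝ} (hc : 0 < c) (h : c ≤ nrm v ^ 2) :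
    v ≠ 0 := by
  rintro rfl
  exact hc.not_ge (h.trans_eq (by simp [nrm, dotp]))

lemma nrm_sq (v : Fin n → ℝ) : nrm v ^ 2 = dotp v v := by
  rw [nrm_eq_norm, dotp_eq_inner, real_inner_self_eq_norm_sq]

lemma nrm_mul_self (v : Fin n → ℝ) : nrm v * nrm v = dotp v v := by
  rw [← sq, nrm_sq]

lemma cos_angl_mul_nrm_mul_nrm (u v : Fin n → ℝ) :
    Real.cos (angl u v) * (nrm u * nrm v) = dotp u v := by
  rw [angl_eq_angle, nrm_eq_norm, nrm_eq_norm, dotp_eq_inner, cos_angle_mul_norm_mul_norm]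

lemma angl_self {v : Fin n → ℝ} (hv : v ≠ 0) : angl v v = 0 := by
  rw [angl_eq_angle, angle_self]
  simpa using hv

lemma angl_mem_Icc (u v : Fin n → ℝ) : angl u v ∈ Set.Icc 0 π :=
  ⟨Real.arccos_nonneg _, Real.arccos_le_pi _⟩

end Euclidean

lemma mul_nrm_mul_nrm_le {k l m p : ℕ} {x : Fin k → ℝ} {y : Fin l → ℝ} {x' : Fin m → ℝ}
    {y' : Fin p → ℝ} {c : ℝ} (hc : 0 ≤ c) (hx : c * nrm x ^ 2 ≤ nrm x' ^ 2)
    (hy : c * nrm y ^ 2 ≤ nrm y' ^ 2) : c * (nrm x * nrm y) ≤ nrm x' * nrm y' := by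
  refine le_of_pow_le_pow_left₀ two_ne_zero (mul_nonneg (nrm_nonneg _) (nrm_nonneg _)) ?_
  calc (c * (nrm x * nrm y)) ^ 2 = (c * nrm x ^ 2) * (c * nrm y ^ 2) := by ring
    _ ≤ nrm x' ^ 2 * nrm y' ^ 2 := mul_le_mul hx hy (by positivity) (sq_nonneg _)
    _ = (nrm x' * nrm y') ^ 2 := by ring

lemma abs_dotp_mulVec_le_specNorm {a b : ℕ} (M : Matrix (Fin a) (Fin b) ℝ) (u : Fin a → ℝ)
    (v : Fin b → ℝ) : |dotp u (M *ᵥ v)| ≤ specNorm M * (nrm u * nrm v) := by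
  rw [dotp_eq_inner, nrm_eq_norm, nrm_eq_norm, mul_left_comm]
  refine (abs_real_inner_le_norm _ _).trans (mul_le_mul_of_nonneg_left ?_ (norm_nonneg _))
  exact (LinearMap.toContinuousLinearMap (Matrix.toEuclideanLin M)).le_opNorm (WithLp.toLp 2 v)

lemma dotp_mulVec_mulVec {a k : ℕ} (A B : Matrix (Fin a) (Fin k) ℝ) (x y : Fin k → ℝ) :
    dotp (A *ᵥ x) (B *ᵥ y) = dotp x ((Aᵀ * B) *ᵥ y) := by
  rw [dotp_eq_dotProduct, dotp_eq_dotProduct, ← Matrix.mulVec_mulVec, Matrix.dotProduct_mulVec x,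
    Matrix.vecMul_transpose]

lemma dotProduct_vecMulVec_mulVec {k : ℕ} (x u w y : Fin k → ℝ) :
    x ⬝ᵥ (vecMulVec u w *ᵥ y) = (x ⬝ᵥ u) * (w ⬝ᵥ y) := by
  rw [vecMulVec_mulVec, op_smul_eq_smul, dotProduct_smul, smul_eq_mul, mul_comm]

lemma dotp_mulVec_swapMat {k : ℕ} {x y : Fin k → ℝ} (hx : x ≠ 0) (hy : y ≠ 0) :
    dotp x (swapMat x y *ᵥ y) = nrm x * nrm y := by
  have hnx := (nrm_pos hx).ne'
  have hny := (nrm_pos hy).ne'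
  set u := (nrm x)⁻¹ • x with hu
  set v := (nrm y)⁻¹ • y with hv
  set c := u ⬝ᵥ v
  set w := v - c • u
  have huu : u ⬝ᵥ u = 1 := by
    rw [hu, smul_dotProduct, dotProduct_smul, ← dotp_eq_dotProduct, ← nrm_mul_self]
    simp [field]
  have hvv : v ⬝ᵥ v = 1 := by
    rw [hv, smul_dotProduct, dotProduct_smul, ← dotp_eq_dotProduct, ← nrm_mul_self]
    simp [field]
  have huw : u ⬝ᵥ w = 0 := by
    simp only [w, c, dotProduct_sub, dotProduct_smul, huu, smul_eq_mul, mul_one, sub_self]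
  have hwv : w ⬝ᵥ v = 1 - c ^ 2 := by
    simp only [w, c, sub_dotProduct, smul_dotProduct, smul_eq_mul, hvv]
    ring
  have hww : w ⬝ᵥ w = 1 - c ^ 2 := by
    rw [show w ⬝ᵥ w = w ⬝ᵥ v - c * (w ⬝ᵥ u) by
        simp only [w, dotProduct_sub, dotProduct_smul, smul_eq_mul],
      dotProduct_comm w u, huw, hwv, mul_zero, sub_zero]
  have hM : swapMat x y = if w ⬝ᵥ w = 0 then c • vecMulVec u u else
      c • vecMulVec u u + vecMulVec u w + vecMulVec w u - (c / (w ⬝ᵥ w)) • vecMulVec w w := rfl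
  suffices h : u ⬝ᵥ (swapMat x y *ᵥ v) = 1 by
    simp only [hu, hv, Matrix.mulVec_smul, smul_dotProduct, dotProduct_smul, smul_eq_mul] at h
    rw [dotp_eq_dotProduct]
    field_simp at h
    linarith
  rw [hM]
  split_ifs with h0
  · have hc : c ^ 2 = 1 := by linarith
    simp only [Matrix.smul_mulVec, dotProduct_smul, dotProduct_vecMulVec_mulVec, huu, smul_eq_mul]
    linear_combination hc
  · simp only [Matrix.sub_mulVec, Matrix.add_mulVec, Matrix.smul_mulVec, dotProduct_sub,
      dotProduct_add, dotProduct_smul, dotProduct_vecMulVec_mulVec, huu, huw, hwv, hww, smul_eq_mul]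
    rw [hww] at h0
    field_simp
    ring

/-- For unit vectors `x, y` at angle `θ` and a standard Gaussian `g`,
`𝔼[relu⟨g, x⟩ · relu⟨g, y⟩] = arcCosKernel θ / 2`; this is the pairing `Q_{x,y}` encodes. -/
def arcCosKernel (θ : ℝ) : ℝ := ((π - θ) * Real.cos θ + Real.sin θ) / π

lemma arcCosKernel_zero : arcCosKernel 0 = 1 := by
  simp [arcCosKernel, Real.pi_ne_zero]

lemma mul_cos_le_sin {φ : ℝ} (h0 : 0 ≤ φ) (h1 : φ ≤ π / 2) : φ * Real.cos φ ≤ Real.sin φ := by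
  rcases h0.eq_or_lt with rfl | h0
  · simp
  rcases h1.eq_or_lt with rfl | h1
  · simp
  have hcos : 0 < Real.cos φ := Real.cos_pos_of_mem_Ioo ⟨by linarith [Real.pi_pos], h1⟩
  have htan := Real.lt_tan h0 h1
  rw [Real.tan_eq_sin_div_cos, lt_div_iff₀ hcos] at htan
  exact htan.le

lemma arcCosKernel_nonneg {θ : ℝ} (hθ : θ ∈ Set.Icc 0 π) : 0 ≤ arcCosKernel θ := by
  obtain ⟨h0, h1⟩ := hθ
  refine div_nonneg ?_ Real.pi_pos.le
  rcases le_or_gt θ (π / 2) with h | h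
  · have := Real.cos_nonneg_of_mem_Icc ⟨by linarith [Real.pi_pos], h⟩
    have := Real.sin_nonneg_of_nonneg_of_le_pi h0 h1
    have : 0 ≤ π - θ := by linarith
    positivity
  · have := mul_cos_le_sin (φ := π - θ) (by linarith) (by linarith)
    rw [Real.cos_pi_sub, Real.sin_pi_sub] at this
    linarith

lemma le_arcCosKernel {θ t : ℝ} (hθ : θ ∈ Set.Icc 0 π) (ht : 0 ≤ t)
    (hcos : -t ≤ Real.cos θ) : (1 - t ^ 2 - π * t) / π ≤ arcCosKernel θ := by
  obtain ⟨h0, h1⟩ := hθ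
  refine div_le_div_of_nonneg_right ?_ Real.pi_pos.le
  have hsin := Real.sin_nonneg_of_nonneg_of_le_pi h0 h1
  have hpyth := Real.sin_sq_add_cos_sq θ
  rcases le_or_gt θ (π / 2) with h | h
  · -- `sin θ + cos θ ≥ sin² θ + cos² θ = 1`, and `π - θ ≥ 1`
    have hcos0 := Real.cos_nonneg_of_mem_Icc ⟨by linarith [Real.pi_pos], h⟩
    have : 1 ≤ π - θ := by linarith [Real.pi_gt_three]
    nlinarith [Real.sin_le_one θ, Real.cos_le_one θ]
  · -- `sin θ ≥ sin² θ = 1 - cos² θ ≥ 1 - t²`, and `(π - θ) cos θ ≥ π cos θ ≥ -π t`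
    have hcos0 : Real.cos θ < 0 := Real.cos_neg_of_pi_div_two_lt_of_lt h (by linarith)
    nlinarith [Real.sin_le_one θ, Real.pi_pos]

lemma dotp_mulVec_Qmat {k : ℕ} {x y : Fin k → ℝ} (hx : x ≠ 0) (hy : y ≠ 0) :
    dotp x (Qmat x y *ᵥ y) = arcCosKernel (angl x y) / 2 * (nrm x * nrm y) := by
  have hxy := cos_angl_mul_nrm_mul_nrm x y
  have hM := dotp_mulVec_swapMat hx hy
  simp only [dotp_eq_dotProduct] at hxy hM ⊢
  simp only [Qmat, Matrix.add_mulVec, Matrix.smul_mulVec, Matrix.one_mulVec, dotProduct_add,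
    dotProduct_smul, smul_eq_mul, hM, ← hxy, arcCosKernel]
  field_simp

namespace WDC

variable {a k : ℕ} {W : Matrix (Fin a) (Fin k) ℝ} {ε : ℝ} {x y : Fin k → ℝ}

lemma nonneg (hW : WDC W ε) (hx : x ≠ 0) : 0 ≤ ε :=
  (norm_nonneg _).trans (hW x x hx hx)

lemma abs_dotp_sub_le (hW : WDC W ε) (hx : x ≠ 0) (hy : y ≠ 0) :
    |dotp (posPart W x *ᵥ x) (posPart W y *ᵥ y) - arcCosKernel (angl x y) / 2 * (nrm x * nrm y)|
      ≤ ε * (nrm x * nrm y) := by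
  rw [dotp_mulVec_mulVec, ← dotp_mulVec_Qmat hx hy, dotp_eq_dotProduct, dotp_eq_dotProduct,
    ← dotProduct_sub, ← Matrix.sub_mulVec, ← dotp_eq_dotProduct]
  exact (abs_dotp_mulVec_le_specNorm _ _ _).trans
    (mul_le_mul_of_nonneg_right (hW x y hx hy) (mul_nonneg (nrm_nonneg x) (nrm_nonneg y)))

lemma half_sub_mul_sq_nrm_le (hW : WDC W ε) (hx : x ≠ 0) :
    (1 / 2 - ε) * nrm x ^ 2 ≤ nrm (posPart W x *ᵥ x) ^ 2 := by
  have h := abs_le.mp (hW.abs_dotp_sub_le hx hx)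
  rw [angl_self hx, arcCosKernel_zero, ← nrm_sq] at h
  nlinarith [h.1]

lemma neg_mul_le_dotp (hW : WDC W ε) (hx : x ≠ 0) (hy : y ≠ 0) :
    -ε * (nrm x * nrm y) ≤ dotp (posPart W x *ᵥ x) (posPart W y *ᵥ y) := by
  have h := abs_le.mp (hW.abs_dotp_sub_le hx hy)
  have := arcCosKernel_nonneg (angl_mem_Icc x y)
  have := mul_nonneg (nrm_nonneg x) (nrm_nonneg y)
  nlinarith [h.1]

lemma le_dotp_of_neg_mul_le_dotp (hW : WDC W ε) (hx : x ≠ 0) (hy : y ≠ 0) {t : ℝ} (ht : 0 ≤ t)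
    (hxy : -t * (nrm x * nrm y) ≤ dotp x y) :
    ((1 - t ^ 2 - π * t) / π / 2 - ε) * (nrm x * nrm y)
      ≤ dotp (posPart W x *ᵥ x) (posPart W y *ᵥ y) := by
  have hN := mul_pos (nrm_pos hx) (nrm_pos hy)
  have hcos : -t ≤ Real.cos (angl x y) := by
    rw [← cos_angl_mul_nrm_mul_nrm] at hxy
    exact le_of_mul_le_mul_right hxy hN
  have hk := le_arcCosKernel (angl_mem_Icc x y) ht hcos
  have h := abs_le.mp (hW.abs_dotp_sub_le hx hy)
  nlinarith [h.1]

lemma mulVec_ne_zero (hW : WDC W ε) (hε : ε < 1 / 2) (hx : x ≠ 0) : posPart W x *ᵥ x ≠ 0 :=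
  ne_zero_of_pos_le_sq_nrm (by have := nrm_pos hx; positivity) (hW.half_sub_mul_sq_nrm_le hx)

lemma le_dotp_two_layers {b : ℕ} {V : Matrix (Fin b) (Fin a) ℝ} (hW : WDC W ε) (hV : WDC V ε)
    (hε : ε ≤ 1 / 4) (hx : x ≠ 0) (hy : y ≠ 0) :
    ((1 - (4 * ε) ^ 2 - π * (4 * ε)) / π / 2 - ε)
        * (nrm (posPart W x *ᵥ x) * nrm (posPart W y *ᵥ y))
      ≤ dotp (posPart V (posPart W x *ᵥ x) *ᵥ (posPart W x *ᵥ x))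
          (posPart V (posPart W y *ᵥ y) *ᵥ (posPart W y *ᵥ y)) := by
  have hε0 := hW.nonneg hx
  refine hV.le_dotp_of_neg_mul_le_dotp (hW.mulVec_ne_zero (by linarith) hx)
    (hW.mulVec_ne_zero (by linarith) hy) (by positivity) ?_
  have hcorr := hW.neg_mul_le_dotp hx hy
  have hgrow := mul_nrm_mul_nrm_le (by linarith) (hW.half_sub_mul_sq_nrm_le hx)
    (hW.half_sub_mul_sq_nrm_le hy)
  have hN := mul_nonneg (nrm_nonneg x) (nrm_nonneg y)
  nlinarith [mul_le_mul_of_nonneg_left hgrow (by positivity : (0 : ℝ) ≤ 4 * ε),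
    mul_nonneg (mul_nonneg hε0 (by linarith : (0 : ℝ) ≤ 1 / 4 - ε)) hN]

end WDC

section Network

variable {n : ℕ → ℕ} {W : ∀ i : ℕ, Matrix (Fin (n (i + 1))) (Fin (n i)) ℝ} {ε : ℝ}

lemma layerProd_succ_mulVec (i : ℕ) (x : Fin (n 0) → ℝ) :
    layerProd n W (i + 1) x *ᵥ x
      = posPart (W i) (layerProd n W i x *ᵥ x) *ᵥ (layerProd n W i x *ᵥ x) := by
  rw [layerProd, Matrix.mulVec_mulVec]

lemma pow_mul_sq_nrm_le_sq_nrm_layerProd_mulVec {i : ℕ} (hε : ε < 1 / 2)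
    (hW : ∀ j < i, WDC (W j) ε) {x : Fin (n 0) → ℝ} (hx : x ≠ 0) :
    (1 / 2 - ε) ^ i * nrm x ^ 2 ≤ nrm (layerProd n W i x *ᵥ x) ^ 2 := by
  induction i with
  | zero => simp [layerProd]
  | succ i ih =>
    have ih := ih fun j hj => hW j (by omega)
    have hpos : 0 < nrm (layerProd n W i x *ᵥ x) ^ 2 :=
      lt_of_lt_of_le (by have := nrm_pos hx; positivity) ih
    have hne := ne_zero_of_pos_le_sq_nrm hpos le_rfl
    rw [layerProd_succ_mulVec, pow_succ', mul_assoc]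
    exact (mul_le_mul_of_nonneg_left ih (by linarith)).trans
      ((hW i (by omega)).half_sub_mul_sq_nrm_le hne)

lemma layerProd_mulVec_ne_zero {i : ℕ} (hε : ε < 1 / 2) (hW : ∀ j < i, WDC (W j) ε)
    {x : Fin (n 0) → ℝ} (hx : x ≠ 0) : layerProd n W i x *ᵥ x ≠ 0 := by
  have := nrm_pos hx
  exact ne_zero_of_pos_le_sq_nrm (by positivity)
    (pow_mul_sq_nrm_le_sq_nrm_layerProd_mulVec hε hW hx)

end Network

lemma one_div_four_pi_mul_one_div_two_pow_le {ε : ℝ} {k : ℕ} (h0 : 0 ≤ ε)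
    (h : (k + 2) * ε ≤ 1 / 100) :
    1 / (4 * π) * (1 / 2 ^ (k + 2))
      ≤ ((1 - (4 * ε) ^ 2 - π * (4 * ε)) / π / 2 - ε) * (1 / 2 - ε) ^ (k + 1) := by
  have hπ := Real.pi_gt_three
  have hπ' := Real.pi_lt_d2
  set c := (1 - (4 * ε) ^ 2 - π * (4 * ε)) / π / 2 - ε
  have hε : ε ≤ 1 / 200 := by nlinarith
  have hc : 1 / (4 * π) ≤ c := by
    have : 1 / 2 ≤ 1 - 16 * ε ^ 2 - 6 * π * ε := by nlinarith
    rw [show c = (1 - 16 * ε ^ 2 - 6 * π * ε) / (2 * π) by simp only [c]; field_simp; ring,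
      div_le_div_iff₀ (by positivity) (by positivity)]
    nlinarith
  have hbern : 49 / 50 ≤ (1 - 2 * ε) ^ (k + 1) := by
    have := one_add_mul_le_pow (a := -(2 * ε)) (by nlinarith) (k + 1)
    rw [← sub_eq_add_neg] at this
    push_cast at this
    nlinarith
  have h2 : (0 : ℝ) < (1 / 2) ^ (k + 1) := by positivity
  calc 1 / (4 * π) * (1 / 2 ^ (k + 2)) = 1 / (4 * π) * (1 / 2) * (1 / 2) ^ (k + 1) := by
        rw [← _root_.one_div_pow, pow_succ]; ring
    _ ≤ c * (49 / 50) * (1 / 2) ^ (k + 1) := by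
        refine mul_le_mul_of_nonneg_right ?_ h2.le
        have : 0 < 1 / (4 * π) := by positivity
        linarith
    _ ≤ c * (1 - 2 * ε) ^ (k + 1) * (1 / 2) ^ (k + 1) := by
        gcongr
        exact (lt_of_lt_of_le (by positivity) hc).le
    _ = c * (1 / 2 - ε) ^ (k + 1) := by rw [mul_assoc, ← mul_pow]; ring_nf

lemma natCast_mul_le_of_lt_inv_pow_four {d : ℕ} {ε : ℝ} (hd : 1 ≤ d)
    (hε : ε < ((d : ℝ) ^ 4)⁻¹ * (1 / (16 * π)) ^ 2) : (d : ℝ) * ε ≤ 1 / 100 := by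
  have hd1 : (1 : ℝ) ≤ d := by exact_mod_cast hd
  calc (d : ℝ) * ε ≤ d * (((d : ℝ) ^ 4)⁻¹ * (1 / (16 * π)) ^ 2) := by gcongr
    _ = ((d : ℝ) ^ 3)⁻¹ * (1 / (16 * π)) ^ 2 := by field_simp
    _ ≤ 1 * (1 / 10) ^ 2 := by
        gcongr
        · exact inv_le_one_of_one_le₀ (one_le_pow₀ hd1)
        · linarith [Real.pi_gt_three]
    _ = 1 / 100 := by norm_num

theorem statement5_general (d : ℕ) (hd : 2 ≤ d) (ε : ℝ)
    (hε1 : ε < ((d : ℝ) ^ 4)⁻¹ * (1 / (16 * π)) ^ 2)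
    (n : ℕ → ℕ)
    (W : ∀ i : ℕ, Matrix (Fin (n (i + 1))) (Fin (n i)) ℝ)
    (hW : ∀ i < d, WDC (W i) ε) :
    ∀ x y : Fin (n 0) → ℝ, x ≠ 0 → y ≠ 0 →
      (1 / (4 * π)) * (1 / 2 ^ d) * nrm x * nrm y ≤
        dotp ((layerProd n W d x).mulVec x) ((layerProd n W d y).mulVec y) := by
  intro x y hx hy
  have hε0 : 0 ≤ ε := (hW 0 (by omega)).nonneg hx
  have hdε := natCast_mul_le_of_lt_inv_pow_four (by omega) hε1
  obtain ⟨k, rfl⟩ : ∃ k, d = k + 2 := ⟨d - 2, by omega⟩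
  push_cast at hdε
  have hε : ε < 1 / 2 := by nlinarith
  have hWk : ∀ j < k, WDC (W j) ε := fun j hj => hW j (by omega)
  have hWk1 : ∀ j < k + 1, WDC (W j) ε := fun j hj => hW j (by omega)
  have hlast := (hW k (by omega)).le_dotp_two_layers (hW (k + 1) (by omega)) (by nlinarith)
    (layerProd_mulVec_ne_zero hε hWk hx) (layerProd_mulVec_ne_zero hε hWk hy)
  simp only [← layerProd_succ_mulVec] at hlast
  have hnorms := mul_nrm_mul_nrm_le (pow_nonneg (by linarith) _)
    (pow_mul_sq_nrm_le_sq_nrm_layerProd_mulVec hε hWk1 hx)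
    (pow_mul_sq_nrm_le_sq_nrm_layerProd_mulVec hε hWk1 hy)
  have hconst := one_div_four_pi_mul_one_div_two_pow_le hε0 hdε
  have hc : 0 ≤ (1 - (4 * ε) ^ 2 - π * (4 * ε)) / π / 2 - ε :=
    nonneg_of_mul_nonneg_left ((by positivity : (0 : ℝ) ≤ _).trans hconst) (by positivity)
  calc 1 / (4 * π) * (1 / 2 ^ (k + 2)) * nrm x * nrm y
      = 1 / (4 * π) * (1 / 2 ^ (k + 2)) * (nrm x * nrm y) := by ring
    _ ≤ _ := mul_le_mul_of_nonneg_right hconst (mul_nonneg (nrm_nonneg x) (nrm_nonneg y))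
    _ ≤ _ := by rw [mul_assoc]; exact mul_le_mul_of_nonneg_left hnorms hc
    _ ≤ _ := hlast

/-- under the WDC, the outputs of the network at `x` and `y` have
a substantial inner product. -/
theorem statement5 (d : ℕ) (hd : 2 ≤ d) (ε : ℝ) (hε0 : 0 < ε)
    (hε1 : ε < ((d : ℝ) ^ 4)⁻¹ * (1 / (16 * π)) ^ 2)
    (n : ℕ → ℕ) (hn : ∀ i < d, n i < n (i + 1))
    (W : ∀ i : ℕ, Matrix (Fin (n (i + 1))) (Fin (n i)) ℝ)
    (hW : ∀ i < d, WDC (W i) ε) :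
    ∀ x y : Fin (n 0) → ℝ, x ≠ 0 → y ≠ 0 →
      (1 / (4 * π)) * (1 / 2 ^ d) * nrm x * nrm y ≤
        dotp ((layerProd n W d x).mulVec x) ((layerProd n W d y).mulVec y) :=
  statement5_general d hd ε hε1 n W hW
end DPR
end
end

section
/- The sequence (ρ_d) converges to 1 as d → ∞. -/
open Real Filter Set MeasureTheory ProbabilityTheory Matrix
open scoped Classical BigOperators NNReal ENNReal

noncomputable section

namespace DPR

/-!
The recursion is designed so that `cos θ̆_{i+1} = cos θ̆_i · (π − θ̆_i)/π + sin θ̆_i/π`; hence the sum in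
`ρ_d` telescopes to `cos θ̆_d + Π_{i<d} (π − θ̆_i)/π`, and the product vanishes for `d ≥ 1` since its
first factor is `π − θ̆₀ = 0`. So `ρ_d = −2 sin θ̆_d/π + (π − 2θ̆_d)/π · cos θ̆_d`. On `[0, π]` the map
`g` satisfies `g θ < θ` for `θ > 0`, because this is `θ cos θ < sin θ`; thus `θ̆_d` decreases to a
fixed point of `g`, which must be `0`, and `ρ_d → 1`.
-/

lemma mul_cos_lt_sin {θ : ℝ} (h0 : 0 < θ) (hπ : θ ≤ π) : θ * cos θ < sin θ := by
  rcases lt_trichotomy θ (π / 2) with hlt | heq | hgt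
  · have hcos : 0 < cos θ := cos_pos_of_mem_Ioo ⟨by linarith, hlt⟩
    have := lt_tan h0 hlt
    rwa [tan_eq_sin_div_cos, lt_div_iff₀ hcos] at this
  · simp [heq]
  · have hcos : cos θ < 0 := cos_neg_of_pi_div_two_lt_of_lt hgt (by linarith)
    have hsin : 0 ≤ sin θ := sin_nonneg_of_nonneg_of_le_pi h0.le hπ
    nlinarith

lemma gfun_arg_mem_Icc {θ : ℝ} (hθ : θ ∈ Icc 0 π) :
    (cos θ * (π - θ) + sin θ) / π ∈ Icc (-1) 1 := by
  obtain ⟨h0, hπ⟩ := hθ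
  have hsin_le : sin θ ≤ θ := sin_le h0
  have hsin_nonneg : 0 ≤ sin θ := sin_nonneg_of_nonneg_of_le_pi h0 hπ
  have hcos_le : cos θ ≤ 1 := cos_le_one θ
  have hcos_ge : -1 ≤ cos θ := neg_one_le_cos θ
  constructor
  · rw [le_div_iff₀ pi_pos]
    nlinarith
  · rw [div_le_one pi_pos]
    nlinarith

lemma cos_gfun {θ : ℝ} (hθ : θ ∈ Icc 0 π) :
    cos (gfun θ) = (cos θ * (π - θ) + sin θ) / π :=
  cos_arccos (gfun_arg_mem_Icc hθ).1 (gfun_arg_mem_Icc hθ).2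

lemma gfun_mem_Icc (θ : ℝ) : gfun θ ∈ Icc 0 π :=
  ⟨arccos_nonneg _, arccos_le_pi _⟩

lemma continuous_gfun : Continuous gfun := by
  unfold gfun
  fun_prop

lemma gfun_zero : gfun 0 = 0 := by
  simp [gfun, pi_ne_zero]

lemma gfun_lt_self {θ : ℝ} (h0 : 0 < θ) (hπ : θ ≤ π) : gfun θ < θ := by
  have hcos_lt : cos θ < (cos θ * (π - θ) + sin θ) / π := by
    rw [lt_div_iff₀ pi_pos]
    linarith [mul_cos_lt_sin h0 hπ]
  calc gfun θ < arccos (cos θ) :=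
        arccos_lt_arccos (neg_one_le_cos θ) hcos_lt (gfun_arg_mem_Icc ⟨h0.le, hπ⟩).2
    _ = θ := arccos_cos h0.le hπ

lemma gfun_le_self {θ : ℝ} (hθ : θ ∈ Icc 0 π) : gfun θ ≤ θ := by
  rcases hθ.1.eq_or_lt with h | h
  · simp [← h, gfun_zero]
  · exact (gfun_lt_self h hθ.2).le

lemma eq_zero_of_gfun_eq_self {θ : ℝ} (hθ : θ ∈ Icc 0 π) (hfix : gfun θ = θ) : θ = 0 := by
  by_contra hne
  exact (gfun_lt_self (lt_of_le_of_ne hθ.1 (Ne.symm hne)) hθ.2).ne hfix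

section thetaSeq

variable {θ₀ : ℝ}

lemma thetaSeq_mem_Icc (hθ₀ : θ₀ ∈ Icc 0 π) : ∀ d, thetaSeq θ₀ d ∈ Icc 0 π
  | 0 => hθ₀
  | _ + 1 => gfun_mem_Icc _

lemma thetaSeq_antitone (hθ₀ : θ₀ ∈ Icc 0 π) : Antitone (thetaSeq θ₀) :=
  antitone_nat_of_succ_le fun d => gfun_le_self (thetaSeq_mem_Icc hθ₀ d)

lemma tendsto_thetaSeq_zero (hθ₀ : θ₀ ∈ Icc 0 π) : Tendsto (thetaSeq θ₀) atTop (nhds 0) := by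
  have hmem := thetaSeq_mem_Icc hθ₀
  have hbdd : BddBelow (range (thetaSeq θ₀)) := ⟨0, by rintro _ ⟨d, rfl⟩; exact (hmem d).1⟩
  have hlim := tendsto_atTop_ciInf (thetaSeq_antitone hθ₀) hbdd
  set L := ⨅ d, thetaSeq θ₀ d
  have hL : L ∈ Icc 0 π := isClosed_Icc.mem_of_tendsto hlim (Eventually.of_forall hmem)
  have hfix : gfun L = L :=
    tendsto_nhds_unique ((continuous_gfun.tendsto L).comp hlim)
      ((tendsto_add_atTop_iff_nat 1).2 hlim)
  rwa [eq_zero_of_gfun_eq_self hL hfix] at hlim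

lemma sum_sin_mul_prod_thetaSeq (hθ₀ : θ₀ ∈ Icc 0 π) (d : ℕ) :
    ∑ i ∈ Finset.range d, (sin (thetaSeq θ₀ i) / π) *
        ∏ j ∈ Finset.Ico (i + 1) d, (π - thetaSeq θ₀ j) / π
      = cos (thetaSeq θ₀ d) - cos θ₀ * ∏ i ∈ Finset.range d, (π - thetaSeq θ₀ i) / π := by
  induction d with
  | zero => simp [thetaSeq]
  | succ d ih =>
    have hshift : ∀ i ∈ Finset.range d,
        (sin (thetaSeq θ₀ i) / π) * ∏ j ∈ Finset.Ico (i + 1) (d + 1), (π - thetaSeq θ₀ j) / π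
          = (sin (thetaSeq θ₀ i) / π) * (∏ j ∈ Finset.Ico (i + 1) d, (π - thetaSeq θ₀ j) / π)
            * ((π - thetaSeq θ₀ d) / π) := by
      intro i hi
      rw [Finset.prod_Ico_succ_top (Finset.mem_range.1 hi), mul_assoc]
    rw [Finset.sum_range_succ, Finset.sum_congr rfl hshift, ← Finset.sum_mul, ih,
      Finset.prod_range_succ, Finset.Ico_self, Finset.prod_empty, thetaSeq,
      cos_gfun (thetaSeq_mem_Icc hθ₀ d)]
    field_simp
    ring

end thetaSeq

lemma rho_eq_of_pos {d : ℕ} (hd : 0 < d) :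
    rho d = -(2 * sin (thetaSeq π d)) / π + ((π - 2 * thetaSeq π d) / π) * cos (thetaSeq π d) := by
  have hprod : ∏ i ∈ Finset.range d, (π - thetaSeq π i) / π = 0 :=
    Finset.prod_eq_zero (Finset.mem_range.2 hd) (by simp [thetaSeq])
  rw [rho, sum_sin_mul_prod_thetaSeq ⟨pi_pos.le, le_rfl⟩, hprod, cos_pi]
  ring

/-- `ρ_d → 1` as `d → ∞`. -/
theorem statement9 : Filter.Tendsto rho Filter.atTop (nhds 1) := by
  have hlim : Tendsto (fun t : ℝ => -(2 * sin t) / π + ((π - 2 * t) / π) * cos t)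
      (nhds 0) (nhds 1) := by
    have hcont : Continuous (fun t : ℝ => -(2 * sin t) / π + ((π - 2 * t) / π) * cos t) := by
      fun_prop
    simpa [pi_ne_zero] using hcont.tendsto 0
  refine (hlim.comp (tendsto_thetaSeq_zero ⟨pi_pos.le, le_rfl⟩)).congr' ?_
  filter_upwards [eventually_gt_atTop 0] with d hd
  exact (rho_eq_of_pos hd).symm
end DPR
end
end
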